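/- arXiv:2105.13646 — 2 statements merged into one kernel-verified Lean document; each statement's English description precedes it below -/
import Mathlib

section
/- If Φ is a concave continuously differentiable function on a convex compact set Q, and iterates are generated by the Frank-Wolfe algorithm Z^{(i+1)} = (1-τ^{(i)})Z^{(i)} + τ^{(i)} V^{(i)} where V^{(i)} minimizes ⟨∇Φ(Z^{(i)}), Z⟩ over Q and τ^{(i)} ≥ τ̃ > 0 for all i, then the minimal Frank-Wolfe gap μ̃^{(i)} := min_{0≤j≤i} μ^{(j)} satisfies μ̃^{(i)} ≤ (Φ(Z^{(0)}) − Φ*)/(τ̃ (i+1)), where Φ* = min_{Z∈Q} Φ(Z). -/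
open scoped RealInnerProductSpace

/-- Gradient inequality for concave functions: the function lies below its tangent. -/
lemma concave_gradient_ineq_FW {n : ℕ} {Q : Set (EuclideanSpace ℝ (Fin n))}
    (hQconv : Convex ℝ Q) {Φ : EuclideanSpace ℝ (Fin n) → ℝ}
    (hconc : ConcaveOn ℝ Q Φ) {x y gx : EuclideanSpace ℝ (Fin n)}
    (hx : x ∈ Q) (hy : y ∈ Q) (hg : HasGradientAt Φ gx x) :
    Φ y ≤ Φ x + ⟪gx, y - x⟫ := by
  set L : ℝ →ᵃ[ℝ] EuclideanSpace ℝ (Fin n) := AffineMap.lineMap x y with hL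
  have hsub : Set.Icc (0:ℝ) 1 ⊆ L ⁻¹' Q := by
    intro t ht
    have := hQconv.lineMap_mem hx hy ht
    simpa [hL] using this
  have hconcL : ConcaveOn ℝ (Set.Icc (0:ℝ) 1) (Φ ∘ L) :=
    (hconc.comp_affineMap L).subset hsub (convex_Icc 0 1)
  have hLderiv : HasDerivAt (fun t : ℝ => L t) (y - x) 0 := by
    have : HasDerivAt (fun t : ℝ => x + t • (y - x)) ((1:ℝ) • (y - x)) 0 :=
      ((hasDerivAt_id (0:ℝ)).smul_const (y - x)).const_add x
    simpa [hL, AffineMap.lineMap_apply, add_comm, one_smul] using this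
  have hfd : HasFDerivAt Φ ((InnerProductSpace.toDual ℝ _) gx) x := hg
  have hcomp : HasDerivAt (Φ ∘ L) ⟪gx, y - x⟫ 0 := by
    have h0 : L (0:ℝ) = x := by simp [hL]
    rw [← h0] at hfd
    have := hfd.comp_hasDerivAt (0:ℝ) hLderiv
    simpa [InnerProductSpace.toDual_apply_apply] using this
  have hslope := hconcL.slope_le_of_hasDerivAt (Set.left_mem_Icc.2 zero_le_one)
    (Set.right_mem_Icc.2 zero_le_one) zero_lt_one hcomp
  have h1 : (Φ ∘ L) 1 = Φ y := by simp [hL]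
  have h0 : (Φ ∘ L) 0 = Φ x := by simp [hL]
  rw [slope_def_field, h1, h0] at hslope
  simp only [div_one, sub_zero] at hslope
  linarith [hslope]

/-- Frank-Wolfe convergence rate: the minimal Frank-Wolfe gap after `i` iterations is
bounded by `(Φ(Z⁰) - Φ*) / (τ̃ (i+1))`. -/
theorem frank_wolfe_min_gap_rate
    {n : ℕ} {Q : Set (EuclideanSpace ℝ (Fin n))}
    (hQne : Q.Nonempty) (hQconv : Convex ℝ Q) (hQcomp : IsCompact Q)
    {Φ : EuclideanSpace ℝ (Fin n) → ℝ} {gΦ : EuclideanSpace ℝ (Fin n) → EuclideanSpace ℝ (Fin n)}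
    (hconc : ConcaveOn ℝ Q Φ)
    (hgrad : ∀ z ∈ Q, HasGradientAt Φ (gΦ z) z)
    (hgcont : ContinuousOn gΦ Q)
    (Z V : ℕ → EuclideanSpace ℝ (Fin n)) (τ : ℕ → ℝ) (τt : ℝ)
    (hτt : 0 < τt) (hτ : ∀ i, τt ≤ τ i ∧ τ i ≤ 1)
    (hZ0 : Z 0 ∈ Q)
    (hV : ∀ i, V i ∈ Q ∧ ∀ Y ∈ Q, ⟪gΦ (Z i), V i⟫ ≤ ⟪gΦ (Z i), Y⟫)
    (hZsucc : ∀ i, Z (i + 1) = (1 - τ i) • Z i + τ i • V i)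
    (μ : ℕ → ℝ)
    (hμ : ∀ i, μ i = sSup ((fun Y => ⟪gΦ (Z i), Z i - Y⟫) '' Q))
    (Φstar : ℝ) (hΦstar : Φstar = sInf (Φ '' Q)) (i : ℕ) :
    ∃ j ≤ i, μ j ≤ (Φ (Z 0) - Φstar) / (τt * (i + 1)) := by
  -- all iterates are in Q
  have hZQ : ∀ j, Z j ∈ Q := by
    intro j
    induction j with
    | zero => exact hZ0
    | succ k ih =>
      rw [hZsucc k]
      exact hQconv ih (hV k).1 (by linarith [(hτ k).1, (hτ k).2])
        (by linarith [(hτ k).1]) (by ring)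
  -- μ j equals the gap at V j
  have hμV : ∀ j, μ j = ⟪gΦ (Z j), Z j - V j⟫ := by
    intro j
    rw [hμ j]
    apply le_antisymm
    · apply csSup_le (hQne.image _)
      rintro _ ⟨Y, hY, rfl⟩
      simp only [inner_sub_right]
      have := (hV j).2 Y hY
      linarith
    · apply le_csSup
      · refine ⟨⟪gΦ (Z j), Z j - V j⟫, ?_⟩
        rintro _ ⟨Y, hY, rfl⟩
        simp only [inner_sub_right]
        have := (hV j).2 Y hY
        linarith
      · exact ⟨V j, (hV j).1, rfl⟩
  -- μ j is nonnegative
  have hμ0 : ∀ j, 0 ≤ μ j := by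
    intro j
    rw [hμV j]
    have := (hV j).2 (Z j) (hZQ j)
    simp only [inner_sub_right]
    linarith
  -- descent inequality
  have hdesc : ∀ j, Φ (Z (j + 1)) ≤ Φ (Z j) - τ j * μ j := by
    intro j
    have key := concave_gradient_ineq_FW hQconv hconc (hZQ j) (hZQ (j+1)) (hgrad _ (hZQ j))
    have hdiff : Z (j + 1) - Z j = τ j • (V j - Z j) := by
      rw [hZsucc j]; module
    rw [hdiff, real_inner_smul_right] at key
    have hneg : ⟪gΦ (Z j), V j - Z j⟫ = -μ j := by
      rw [hμV j, ← inner_neg_right]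
      congr 1
      abel
    rw [hneg] at key
    linarith
  -- telescoping
  have htel : ∀ k, Φ (Z k) ≤ Φ (Z 0) - ∑ j ∈ Finset.range k, τ j * μ j := by
    intro k
    induction k with
    | zero => simp
    | succ m ih =>
      have := hdesc m
      rw [Finset.sum_range_succ]
      linarith
  -- Φstar is a lower bound
  have hcontΦ : ContinuousOn Φ Q := fun z hz =>
    ((hgrad z hz).differentiableAt.continuousAt).continuousWithinAt
  have hbdd : BddBelow (Φ '' Q) := (hQcomp.image_of_continuousOn hcontΦ).bddBelow
  have hstar : Φstar ≤ Φ (Z (i + 1)) := by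
    rw [hΦstar]
    exact csInf_le hbdd ⟨Z (i + 1), hZQ _, rfl⟩
  -- pick the minimizer among the first i+1 gaps
  obtain ⟨j, hjmem, hjmin⟩ :=
    Finset.exists_min_image (Finset.range (i + 1)) μ ⟨0, by simp⟩
  have hji : j ≤ i := Nat.lt_succ_iff.mp (Finset.mem_range.mp hjmem)
  refine ⟨j, hji, ?_⟩
  -- sum lower bound
  have hsum : (i + 1 : ℝ) * (τt * μ j) ≤ ∑ k ∈ Finset.range (i + 1), τ k * μ k := by
    have hterm : ∀ k ∈ Finset.range (i + 1), τt * μ j ≤ τ k * μ k := by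
      intro k hk
      have h1 : μ j ≤ μ k := hjmin k hk
      have h2 : τt ≤ τ k := (hτ k).1
      nlinarith [hμ0 j, hμ0 k]
    calc (i + 1 : ℝ) * (τt * μ j)
        = ∑ _k ∈ Finset.range (i + 1), τt * μ j := by
          rw [Finset.sum_const, Finset.card_range, nsmul_eq_mul]
          push_cast
          ring
      _ ≤ _ := Finset.sum_le_sum hterm
  have hsum2 : ∑ k ∈ Finset.range (i + 1), τ k * μ k ≤ Φ (Z 0) - Φstar := by
    have := htel (i + 1)
    linarith
  have hpos : (0:ℝ) < τt * (i + 1) := by positivity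
  rw [le_div_iff₀ hpos]
  nlinarith
end

section
/- For a nonnegative matrix V ∈ ℝ_+^{F×N} with no zero column, the optimal value of the rank-one nonnegative over-approximation problem min { Σ_{f,n} w_f h_n : w_f h_n ≥ V_{fn} for all f,n, w ≥ 0, h ≥ 0 } equals the optimal value of the convex problem min { Σ_n max_f (u_f V_{fn}) : u > 0, Σ_f 1/u_f ≤ 1 }. -/
/-!
Given a feasible `u`, the pair `w = u⁻¹`, `h n = ⨆ f, u f * V f n` is feasible for the rank-one
problem with cost `(∑ f, (u f)⁻¹) * ∑ n, h n ≤ ∑ n, h n`. Conversely, for a rank-one pair with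
`w > 0`, the normalization `u f = (∑ w) / w f` has `∑ f, (u f)⁻¹ = 1` and `u f * V f n ≤ (∑ w) * h n`,
so its convex objective is at most the rank-one cost `(∑ w) * (∑ h)`. Zero entries of `w` are
removed by passing to `w + δ` and letting `δ → 0⁺`; the convex infimum need not be attained.
-/

open Finset Filter Topology

variable {ι κ : Type*} [Fintype ι] [Fintype κ]

def rankOneOverApproxCosts (V : Matrix ι κ ℝ) : Set ℝ :=
  {c | ∃ (w : ι → ℝ) (h : κ → ℝ), (∀ f, 0 ≤ w f) ∧ (∀ n, 0 ≤ h n) ∧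
    (∀ f n, V f n ≤ w f * h n) ∧ c = ∑ f, ∑ n, w f * h n}

def convexReformulationCosts (V : Matrix ι κ ℝ) : Set ℝ :=
  {c | ∃ u : ι → ℝ, (∀ f, 0 < u f) ∧ (∑ f, (u f)⁻¹) ≤ 1 ∧ c = ∑ n, ⨆ f, u f * V f n}

lemma rankOneOverApproxCosts_bddBelow (V : Matrix ι κ ℝ) :
    BddBelow (rankOneOverApproxCosts V) := by
  refine ⟨0, ?_⟩
  rintro _ ⟨w, h, hw, hh, -, rfl⟩
  exact sum_nonneg fun f _ ↦ sum_nonneg fun n _ ↦ mul_nonneg (hw f) (hh n)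

lemma convexReformulationCosts_bddBelow {V : Matrix ι κ ℝ} (hV : ∀ f n, 0 ≤ V f n) :
    BddBelow (convexReformulationCosts V) := by
  refine ⟨0, ?_⟩
  rintro _ ⟨u, hu, -, rfl⟩
  exact sum_nonneg fun n _ ↦ Real.iSup_nonneg fun f ↦ mul_nonneg (hu f).le (hV f n)

lemma convexReformulationCosts_nonempty (V : Matrix ι κ ℝ) :
    (convexReformulationCosts V).Nonempty := by
  refine ⟨_, fun _ ↦ (Fintype.card ι : ℝ), fun f ↦ ?_, ?_, rfl⟩
  · exact Nat.cast_pos.2 (Fintype.card_pos_iff.2 ⟨f⟩)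
  · simp only [sum_const, card_univ, nsmul_eq_mul]
    exact mul_inv_le_one

lemma exists_rankOneOverApproxCosts_le {V : Matrix ι κ ℝ} (hV : ∀ f n, 0 ≤ V f n) {c : ℝ}
    (hc : c ∈ convexReformulationCosts V) : ∃ c' ∈ rankOneOverApproxCosts V, c' ≤ c := by
  obtain ⟨u, hu, hu_inv, rfl⟩ := hc
  set h : κ → ℝ := fun n ↦ ⨆ f, u f * V f n
  have hh : ∀ n, 0 ≤ h n := fun n ↦ Real.iSup_nonneg fun f ↦ mul_nonneg (hu f).le (hV f n)
  have hVh : ∀ f n, V f n ≤ (u f)⁻¹ * h n := fun f n ↦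
    (le_inv_mul_iff₀ (hu f)).2 (le_ciSup (Finite.bddAbove_range fun f ↦ u f * V f n) f)
  refine ⟨_, ⟨fun f ↦ (u f)⁻¹, h, fun f ↦ (inv_pos.2 (hu f)).le, hh, hVh, rfl⟩, ?_⟩
  rw [← Fintype.sum_mul_sum]
  exact mul_le_of_le_one_left (sum_nonneg fun n _ ↦ hh n) hu_inv

lemma sInf_convexReformulationCosts_le_of_pos {V : Matrix ι κ ℝ} (hV : ∀ f n, 0 ≤ V f n)
    {w : ι → ℝ} {h : κ → ℝ} (hw : ∀ f, 0 < w f) (hh : ∀ n, 0 ≤ h n)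
    (hVwh : ∀ f n, V f n ≤ w f * h n) :
    sInf (convexReformulationCosts V) ≤ (∑ f, w f) * ∑ n, h n := by
  set S := ∑ f, w f
  have hw_le : ∀ f, w f ≤ S := fun f ↦ single_le_sum (fun i _ ↦ (hw i).le) (mem_univ f)
  have hS : 0 ≤ S := sum_nonneg fun f _ ↦ (hw f).le
  have hu : ∀ f, 0 < S / w f := fun f ↦ div_pos ((hw f).trans_le (hw_le f)) (hw f)
  have hu_inv : ∑ f, (S / w f)⁻¹ ≤ 1 := by
    simp_rw [inv_div]
    rw [← sum_div]
    exact div_self_le_one S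
  have hmax : ∀ n, ⨆ f, S / w f * V f n ≤ S * h n := fun n ↦
    Real.iSup_le (fun f ↦ calc
      S / w f * V f n ≤ S / w f * (w f * h n) := mul_le_mul_of_nonneg_left (hVwh f n) (hu f).le
      _ = S * h n := by field_simp [(hw f).ne'])
      (mul_nonneg hS (hh n))
  calc sInf (convexReformulationCosts V) ≤ ∑ n, ⨆ f, S / w f * V f n :=
        csInf_le (convexReformulationCosts_bddBelow hV) ⟨_, hu, hu_inv, rfl⟩
    _ ≤ ∑ n, S * h n := sum_le_sum fun n _ ↦ hmax n
    _ = S * ∑ n, h n := (mul_sum ..).symm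

lemma sInf_convexReformulationCosts_le {V : Matrix ι κ ℝ} (hV : ∀ f n, 0 ≤ V f n)
    {w : ι → ℝ} {h : κ → ℝ} (hw : ∀ f, 0 ≤ w f) (hh : ∀ n, 0 ≤ h n)
    (hVwh : ∀ f n, V f n ≤ w f * h n) :
    sInf (convexReformulationCosts V) ≤ (∑ f, w f) * ∑ n, h n := by
  have hlim : Tendsto (fun δ : ℝ ↦ (∑ f, (w f + δ)) * ∑ n, h n) (𝓝[>] 0)
      (𝓝 ((∑ f, w f) * ∑ n, h n)) := by
    have hcont : Continuous fun δ : ℝ ↦ (∑ f, (w f + δ)) * ∑ n, h n := by fun_prop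
    simpa using (hcont.tendsto 0).mono_left nhdsWithin_le_nhds
  refine ge_of_tendsto hlim (eventually_mem_nhdsWithin.mono fun δ (hδ : 0 < δ) ↦ ?_)
  refine sInf_convexReformulationCosts_le_of_pos hV (fun f ↦ add_pos_of_nonneg_of_pos (hw f) hδ)
    hh fun f n ↦ (hVwh f n).trans ?_
  exact mul_le_mul_of_nonneg_right (le_add_of_nonneg_right hδ.le) (hh n)

lemma sInf_rankOneOverApproxCosts_le_sInf_convexReformulationCosts {V : Matrix ι κ ℝ}
    (hV : ∀ f n, 0 ≤ V f n) :
    sInf (rankOneOverApproxCosts V) ≤ sInf (convexReformulationCosts V) :=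
  le_csInf (convexReformulationCosts_nonempty V) fun c hc ↦ by
    obtain ⟨c', hc', hle⟩ := exists_rankOneOverApproxCosts_le hV hc
    exact (csInf_le (rankOneOverApproxCosts_bddBelow V) hc').trans hle

lemma sInf_convexReformulationCosts_le_sInf_rankOneOverApproxCosts {V : Matrix ι κ ℝ}
    (hV : ∀ f n, 0 ≤ V f n) :
    sInf (convexReformulationCosts V) ≤ sInf (rankOneOverApproxCosts V) := by
  obtain ⟨c, hc⟩ := convexReformulationCosts_nonempty V
  obtain ⟨c', hc', -⟩ := exists_rankOneOverApproxCosts_le hV hc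
  refine le_csInf ⟨c', hc'⟩ ?_
  rintro _ ⟨w, h, hw, hh, hVwh, rfl⟩
  rw [← Fintype.sum_mul_sum]
  exact sInf_convexReformulationCosts_le hV hw hh hVwh

theorem rank_one_nmo_eq_convex_reformulation_general
    {F N : ℕ} (V : Matrix (Fin F) (Fin N) ℝ)
    (hV : ∀ f n, 0 ≤ V f n) :
    sInf {c : ℝ | ∃ (w : Fin F → ℝ) (h : Fin N → ℝ),
        (∀ f, 0 ≤ w f) ∧ (∀ n, 0 ≤ h n) ∧ (∀ f n, V f n ≤ w f * h n) ∧
        c = ∑ f, ∑ n, w f * h n} =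
      sInf {c : ℝ | ∃ u : Fin F → ℝ,
        (∀ f, 0 < u f) ∧ (∑ f, (u f)⁻¹) ≤ 1 ∧
        c = ∑ n, ⨆ f, u f * V f n} :=
  le_antisymm (sInf_rankOneOverApproxCosts_le_sInf_convexReformulationCosts hV)
    (sInf_convexReformulationCosts_le_sInf_rankOneOverApproxCosts hV)

/-- The optimal value of the rank-one nonnegative over-approximation problem equals the
optimal value of its convex reformulation. -/
theorem rank_one_nmo_eq_convex_reformulation
    {F N : ℕ} (hF : 0 < F) (V : Matrix (Fin F) (Fin N) ℝ)
    (hV : ∀ f n, 0 ≤ V f n) (hcol : ∀ n, ∃ f, 0 < V f n) :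
    sInf {c : ℝ | ∃ (w : Fin F → ℝ) (h : Fin N → ℝ),
        (∀ f, 0 ≤ w f) ∧ (∀ n, 0 ≤ h n) ∧ (∀ f n, V f n ≤ w f * h n) ∧
        c = ∑ f, ∑ n, w f * h n} =
      sInf {c : ℝ | ∃ u : Fin F → ℝ,
        (∀ f, 0 < u f) ∧ (∑ f, (u f)⁻¹) ≤ 1 ∧
        c = ∑ n, ⨆ f, u f * V f n} :=
  rank_one_nmo_eq_convex_reformulation_general V hV
end
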